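/- arXiv:2410.21811 — 2 statements merged into one kernel-verified Lean document; each statement's English description precedes it below -/
import Mathlib

section
/- For any unit vector ψ in a finite-dimensional complex Hilbert space and any finite set {A_1,...,A_M} of pairwise anti-commuting Hermitian unitary matrices, the sum over j of (⟨ψ, A_j ψ⟩)² is at most 1. -/
/-!
With `c j = ⟨ψ, A j ψ⟩` and `B = ∑ j, c j • A j`, anticommutation cancels the cross terms of `B * B`,
so `B * B = s • 1` with `s = ∑ j, c j ^ 2`, while `⟨ψ, B ψ⟩ = s`. Cauchy–Schwarz then gives
`s ^ 2 = ⟨ψ, B ψ⟩ ^ 2 ≤ ‖B ψ‖ ^ 2 = ⟨ψ, (B * B) ψ⟩ = s`, hence `s ≤ 1`.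
-/

open Matrix

theorem sum_smul_mul_self_of_anticommute {ι K R : Type*} [Fintype ι] [CommRing K] [Ring R]
    [Algebra K R] (a : ι → R) (c : ι → K) (hsq : ∀ i, a i * a i = 1)
    (hanti : ∀ i j, i ≠ j → a i * a j = -(a j * a i)) :
    (∑ i, c i • a i) * (∑ i, c i • a i) = (∑ i, c i ^ 2) • 1 := by
  classical
  have hterm : ∀ i j, c i • a i * (c j • a j) = (c i * c j) • (a i * a j) := fun i j => by
    rw [smul_mul_smul_comm]
  have hoffDiag : ∑ p ∈ Finset.univ.offDiag, c p.1 • a p.1 * (c p.2 • a p.2) = 0 := by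
    refine Finset.sum_involution (fun p _ => p.swap) (fun p hp => ?_) (fun p hp _ => ?_)
      (fun p hp => by simpa [and_comm, eq_comm] using hp) (fun _ _ => rfl)
    · rw [hterm, hterm, hanti _ _ (Finset.mem_offDiag.mp hp).2.2, mul_comm, smul_neg]
      exact neg_add_cancel _
    · exact mt (congrArg Prod.snd) (Finset.mem_offDiag.mp hp).2.2
  rw [Finset.sum_mul_sum, ← Finset.sum_product', ← Finset.diag_union_offDiag,
    Finset.sum_union (Finset.disjoint_diag_offDiag _), Finset.sum_diag, hoffDiag, add_zero,
    Finset.sum_smul]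
  simp only [hterm, hsq, sq]

namespace Matrix

variable {𝕜 n : Type*} [RCLike 𝕜] [Fintype n]

open RCLike

theorem IsHermitian.mul_self_eq_one_of_mem_unitaryGroup [DecidableEq n] {A : Matrix n n 𝕜}
    (hA : A.IsHermitian) (hU : A ∈ unitaryGroup n 𝕜) : A * A = 1 := by
  simpa [star_eq_conjTranspose, hA.eq] using mem_unitaryGroup_iff.mp hU

theorem re_star_dotProduct_sq_le (x y : n → 𝕜) :
    re (star x ⬝ᵥ y) ^ 2 ≤ re (star x ⬝ᵥ x) * re (star y ⬝ᵥ y) := by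
  have h := inner_mul_inner_self_le (𝕜 := 𝕜) (WithLp.toLp 2 x) (WithLp.toLp 2 y)
  rw [← norm_inner_symm (WithLp.toLp 2 x), ← sq] at h
  simp only [EuclideanSpace.inner_toLp_toLp, dotProduct_comm _ (star _)] at h
  exact (sq_le_sq.mpr (abs_re_le_norm _ |>.trans (abs_norm _).symm.le)).trans h

theorem IsHermitian.re_star_dotProduct_mulVec_sq_le [DecidableEq n] {B : Matrix n n 𝕜}
    (hB : B.IsHermitian) {s : ℝ} (hBB : B * B = s • 1) (x : n → 𝕜) :
    re (star x ⬝ᵥ B *ᵥ x) ^ 2 ≤ s * re (star x ⬝ᵥ x) ^ 2 :=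
  calc re (star x ⬝ᵥ B *ᵥ x) ^ 2 ≤ re (star x ⬝ᵥ x) * re (star (B *ᵥ x) ⬝ᵥ B *ᵥ x) :=
        re_star_dotProduct_sq_le x _
    _ = s * re (star x ⬝ᵥ x) ^ 2 := by
      rw [star_mulVec, ← dotProduct_mulVec, mulVec_mulVec, hB.eq, hBB, smul_mulVec, one_mulVec,
        dotProduct_smul, smul_re]
      ring

end Matrix

/-- For any unit vector ψ in ℂ^d and any finite set of pairwise anti-commuting
Hermitian unitary matrices A_1,...,A_M, the sum of squared expectation values is at most 1. -/
theorem sum_sq_expectation_anticommuting_le_one {d M : ℕ}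
    (A : Fin M → Matrix (Fin d) (Fin d) ℂ)
    (hherm : ∀ j, (A j).IsHermitian)
    (hunit : ∀ j, A j ∈ Matrix.unitaryGroup (Fin d) ℂ)
    (hanti : ∀ i j, i ≠ j → A i * A j = -(A j * A i))
    (ψ : Fin d → ℂ) (hψ : ∑ i, Complex.normSq (ψ i) = 1) :
    ∑ j, ((star ψ ⬝ᵥ (A j) *ᵥ ψ).re) ^ 2 ≤ 1 := by
  set c : Fin M → ℝ := fun j => (star ψ ⬝ᵥ A j *ᵥ ψ).re
  set B := ∑ j, c j • A j
  have hB : B.IsHermitian :=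
    isSelfAdjoint_sum _ fun j _ => (hherm j).smul (IsSelfAdjoint.all (c j))
  have hBB : B * B = (∑ j, c j ^ 2) • 1 := sum_smul_mul_self_of_anticommute A c
    (fun j => (hherm j).mul_self_eq_one_of_mem_unitaryGroup (hunit j)) hanti
  have hexpect : (star ψ ⬝ᵥ B *ᵥ ψ).re = ∑ j, c j ^ 2 := by
    simp [B, sum_mulVec, dotProduct_sum, smul_mulVec, Complex.re_sum, c, sq]
  have hnorm : (star ψ ⬝ᵥ ψ).re = 1 := by
    simp [dotProduct, Complex.re_sum, ← hψ, Complex.normSq_apply]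
  have key := hB.re_star_dotProduct_mulVec_sq_le hBB ψ
  rw [RCLike.re_to_complex, RCLike.re_to_complex, hexpect, hnorm] at key
  have hs : 0 ≤ ∑ j, c j ^ 2 := Finset.sum_nonneg fun j _ => sq_nonneg (c j)
  nlinarith
end

section
/- For finite simple graphs Γ₁ and Γ₂ on disjoint vertex sets, the Lovász theta of the disjoint union is the sum: ϑ(Γ₁ ⊔ Γ₂) = ϑ(Γ₁) + ϑ(Γ₂). -/
open Matrix

/-- The Lovász theta function of a graph on a finite vertex type `V`, defined via the SDP
`sup { Tr(ρJ) : ρ ⪰ 0, Tr ρ = 1, ρ_{jk} = 0 for edges {j,k} }`. -/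
noncomputable def lovaszTheta {V : Type*} [Fintype V] (G : SimpleGraph V) : ℝ :=
  sSup {r : ℝ | ∃ ρ : Matrix V V ℝ, ρ.PosSemidef ∧ ρ.trace = 1 ∧
    (∀ j k, G.Adj j k → ρ j k = 0) ∧ r = ∑ j, ∑ k, ρ j k}

/-- The disjoint union of two graphs, on the sum of their vertex types. -/
def disjUnionGraph {V₁ V₂ : Type*} (G₁ : SimpleGraph V₁) (G₂ : SimpleGraph V₂) :
    SimpleGraph (V₁ ⊕ V₂) where
  Adj x y := match x, y with
    | .inl a, .inl b => G₁.Adj a b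
    | .inr a, .inr b => G₂.Adj a b
    | _, _ => False
  symm := by
    refine ⟨?_⟩
    intro x y h
    cases x <;> cases y <;> simp_all <;> exact h.symm
  loopless := by
    refine ⟨?_⟩
    intro x h
    cases x <;> simp_all

/-!
For the upper bound, let `ρ` be feasible for `G₁ ⊔ G₂` and let `s + t = 1` be the traces of its
diagonal blocks. Rescaling the blocks shows that their entry sums satisfy `α ≤ s ϑ(G₁)` and
`β ≤ t ϑ(G₂)`, and Cauchy–Schwarz for `ρ` bounds the sum `γ` of the off-diagonal block by
`√(αβ) ≤ √(t ϑ(G₁) · s ϑ(G₂)) ≤ (t ϑ(G₁) + s ϑ(G₂)) / 2`, so `α + β + 2γ ≤ ϑ(G₁) + ϑ(G₂)`.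

For the lower bound, feasible `ρ₁, ρ₂` of values `a, b` glue to the feasible matrix
`(a + b)⁻¹ [a ρ₁, w₁ w₂ᵀ; w₂ w₁ᵀ, b ρ₂]` with `wᵢ = ρᵢ 𝟙`, of value `a + b`; it is positive
semidefinite because `(uᵀ ρ₁ 𝟙)² ≤ a · uᵀ ρ₁ u` by Cauchy–Schwarz.
-/

namespace Matrix

variable {m n R : Type*} [Fintype m] [Fintype n]

theorem one_dotProduct_mulVec_one [NonAssocSemiring R] (ρ : Matrix n n R) :
    1 ⬝ᵥ ρ *ᵥ 1 = ∑ j, ∑ k, ρ j k := by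
  simp [dotProduct, mulVec]

theorem trace_fromBlocks [AddCommMonoid R] (A : Matrix m m R) (B : Matrix m n R)
    (C : Matrix n m R) (D : Matrix n n R) : (fromBlocks A B C D).trace = A.trace + D.trace := by
  simp [trace, Fintype.sum_sum_type]

namespace PosSemidef

theorem sum_sum_nonneg [CommRing R] [PartialOrder R] [StarRing R] [TrivialStar R]
    {ρ : Matrix n n R} (hρ : ρ.PosSemidef) : 0 ≤ ∑ j, ∑ k, ρ j k := by
  simpa [one_dotProduct_mulVec_one] using hρ.dotProduct_mulVec_nonneg 1

variable [CommRing R] [LinearOrder R] [IsStrictOrderedRing R] [StarRing R] [TrivialStar R]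
  {ρ : Matrix n n R}

theorem dotProduct_mulVec_sq_le (hρ : ρ.PosSemidef) (x y : n → R) :
    (x ⬝ᵥ ρ *ᵥ y) ^ 2 ≤ (x ⬝ᵥ ρ *ᵥ x) * (y ⬝ᵥ ρ *ᵥ y) := by
  classical
  have hsymm : LinearMap.IsSymm ρ.toBilin' := LinearMap.BilinForm.isSymm_iff.mp <|
    isSymm_toBilin'_iff_isSymm.mpr (isHermitian_iff_isSymm.mp hρ.isHermitian)
  simpa [toBilin'_apply'] using ρ.toBilin'.apply_sq_le_of_symm
    (fun x ↦ by simpa [toBilin'_apply'] using hρ.dotProduct_mulVec_nonneg x) hsymm x y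

theorem two_mul_apply_le (hρ : ρ.PosSemidef) (j k : n) : 2 * ρ j k ≤ ρ j j + ρ k k := by
  classical
  have h := hρ.dotProduct_mulVec_sq_le (Pi.single j 1) (Pi.single k 1)
  simp only [mulVec_single_one, single_one_dotProduct, col_apply] at h
  nlinarith [hρ.diag_nonneg (i := j), hρ.diag_nonneg (i := k), sq_nonneg (ρ j j - ρ k k)]

theorem sum_sum_le_card_mul_trace (hρ : ρ.PosSemidef) :
    ∑ j, ∑ k, ρ j k ≤ Fintype.card n * ρ.trace := by
  have h := Finset.sum_le_sum fun j (_ : j ∈ Finset.univ) ↦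
    Finset.sum_le_sum fun k (_ : k ∈ Finset.univ) ↦ hρ.two_mul_apply_le j k
  simp only [Finset.sum_add_distrib, Finset.sum_const, Finset.card_univ, nsmul_eq_mul,
    ← Finset.mul_sum] at h
  simp only [trace, diag]
  linarith

theorem fromBlocks_smul_vecMulVec {ρ₁ : Matrix m m R} {ρ₂ : Matrix n n R}
    (h₁ : ρ₁.PosSemidef) (h₂ : ρ₂.PosSemidef) (x₁ : m → R) (x₂ : n → R) :
    (fromBlocks ((x₁ ⬝ᵥ ρ₁ *ᵥ x₁) • ρ₁) (vecMulVec (ρ₁ *ᵥ x₁) (ρ₂ *ᵥ x₂))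
      (vecMulVec (ρ₂ *ᵥ x₂) (ρ₁ *ᵥ x₁)) ((x₂ ⬝ᵥ ρ₂ *ᵥ x₂) • ρ₂)).PosSemidef := by
  refine .of_dotProduct_mulVec_nonneg (isHermitian_fromBlocks_iff.mpr
    ⟨h₁.isHermitian.smul (.all _), by simp, by simp, h₂.isHermitian.smul (.all _)⟩) fun x ↦ ?_
  obtain ⟨u, v, rfl⟩ : ∃ u v, x = Sum.elim u v := ⟨_, _, (Sum.elim_comp_inl_inr x).symm⟩
  have hu := h₁.dotProduct_mulVec_sq_le u x₁
  have hv := h₂.dotProduct_mulVec_sq_le v x₂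
  simp only [star_trivial, fromBlocks_mulVec, sumElim_dotProduct_sumElim, dotProduct_add,
    smul_mulVec, dotProduct_smul, vecMulVec_mulVec, op_smul_eq_smul, smul_eq_mul,
    Sum.elim_comp_inl, Sum.elim_comp_inr, dotProduct_comm (ρ₁ *ᵥ x₁), dotProduct_comm (ρ₂ *ᵥ x₂)]
  nlinarith [sq_nonneg (u ⬝ᵥ ρ₁ *ᵥ x₁ + v ⬝ᵥ ρ₂ *ᵥ x₂)]

end PosSemidef

end Matrix

section LovaszTheta

variable {V W : Type*} [Fintype V] [Fintype W]

def lovaszThetaValues (G : SimpleGraph V) : Set ℝ :=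
  {r : ℝ | ∃ ρ : Matrix V V ℝ, ρ.PosSemidef ∧ ρ.trace = 1 ∧
    (∀ j k, G.Adj j k → ρ j k = 0) ∧ r = ∑ j, ∑ k, ρ j k}

theorem lovaszTheta_eq_sSup (G : SimpleGraph V) : lovaszTheta G = sSup (lovaszThetaValues G) :=
  rfl

theorem lovaszThetaValues_nonneg {G : SimpleGraph V} {r : ℝ} (hr : r ∈ lovaszThetaValues G) :
    0 ≤ r := by
  obtain ⟨ρ, hρ, -, -, rfl⟩ := hr
  exact hρ.sum_sum_nonneg

theorem bddAbove_lovaszThetaValues (G : SimpleGraph V) : BddAbove (lovaszThetaValues G) := by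
  refine ⟨Fintype.card V, ?_⟩
  rintro _ ⟨ρ, hρ, htr, -, rfl⟩
  simpa [htr] using hρ.sum_sum_le_card_mul_trace

theorem lovaszThetaValues_nonempty [Nonempty V] (G : SimpleGraph V) :
    (lovaszThetaValues G).Nonempty := by
  classical
  obtain ⟨v⟩ := ‹Nonempty V›
  refine ⟨_, diagonal (Pi.single v 1), .diagonal (Pi.single_nonneg.mpr zero_le_one), ?_,
    fun j k h ↦ diagonal_apply_ne _ (G.ne_of_adj h), rfl⟩
  simp [trace_diagonal]

theorem lovaszThetaValues_eq_empty [IsEmpty V] (G : SimpleGraph V) :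
    lovaszThetaValues G = ∅ :=
  Set.eq_empty_of_forall_notMem fun _ ⟨ρ, _, htr, _⟩ ↦ by simp [trace] at htr

theorem lovaszTheta_of_isEmpty [IsEmpty V] (G : SimpleGraph V) : lovaszTheta G = 0 := by
  rw [lovaszTheta_eq_sSup, lovaszThetaValues_eq_empty, Real.sSup_empty]

theorem lovaszTheta_nonneg (G : SimpleGraph V) : 0 ≤ lovaszTheta G :=
  Real.sSup_nonneg fun _ ↦ lovaszThetaValues_nonneg

theorem le_lovaszTheta {G : SimpleGraph V} {r : ℝ} (hr : r ∈ lovaszThetaValues G) :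
    r ≤ lovaszTheta G :=
  le_csSup (bddAbove_lovaszThetaValues G) hr

theorem sum_sum_le_trace_mul_lovaszTheta {G : SimpleGraph V} {ρ : Matrix V V ℝ}
    (hρ : ρ.PosSemidef) (hG : ∀ j k, G.Adj j k → ρ j k = 0) :
    ∑ j, ∑ k, ρ j k ≤ ρ.trace * lovaszTheta G := by
  rcases hρ.trace_nonneg.eq_or_lt with htr | htr
  · simp [hρ.trace_eq_zero_iff.mp htr.symm]
  have hmem : (ρ.trace)⁻¹ * ∑ j, ∑ k, ρ j k ∈ lovaszThetaValues G :=
    ⟨(ρ.trace)⁻¹ • ρ, hρ.smul (inv_nonneg.mpr htr.le), by simp [trace_smul, htr.ne'],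
      fun j k h ↦ by simp [hG j k h], by simp [Finset.mul_sum]⟩
  rw [← inv_mul_le_iff₀ htr]
  exact le_lovaszTheta hmem

theorem lovaszTheta_le_of_equiv {G : SimpleGraph W} {H : SimpleGraph V} (e : W ≃ V)
    (he : ∀ j k, G.Adj j k → H.Adj (e j) (e k)) : lovaszTheta H ≤ lovaszTheta G := by
  refine Real.sSup_le ?_ (lovaszTheta_nonneg G)
  rintro _ ⟨ρ, hρ, htr, hH, rfl⟩
  have h := sum_sum_le_trace_mul_lovaszTheta (G := G) (hρ.submatrix e)
    fun j k h ↦ hH _ _ (he j k h)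
  have htr' : (ρ.submatrix e e).trace = 1 := by
    rw [← htr]; exact e.sum_comp fun j ↦ ρ j j
  simp only [submatrix_apply, htr', one_mul] at h
  simpa only [e.sum_comp (ρ _), e.sum_comp fun j ↦ ∑ k, ρ j k] using h

end LovaszTheta

theorem add_add_two_mul_le_of_sq_le_mul {α β γ s t θ₁ θ₂ : ℝ} (hs : 0 ≤ s) (ht : 0 ≤ t)
    (hst : s + t = 1) (hβ₀ : 0 ≤ β) (hθ₁ : 0 ≤ θ₁) (hθ₂ : 0 ≤ θ₂)
    (hα : α ≤ s * θ₁) (hβ : β ≤ t * θ₂) (hγ : γ ^ 2 ≤ α * β) :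
    α + β + 2 * γ ≤ θ₁ + θ₂ := by
  have hαβ : α * β ≤ (t * θ₁) * (s * θ₂) := by
    nlinarith [mul_le_mul hα hβ hβ₀ (mul_nonneg hs hθ₁)]
  have h2γ : 2 * γ ≤ t * θ₁ + s * θ₂ :=
    le_of_sq_le_sq (by nlinarith [sq_nonneg (t * θ₁ - s * θ₂)]) (by positivity)
  have hθ : θ₁ + θ₂ = s * θ₁ + t * θ₂ + (t * θ₁ + s * θ₂) := by
    linear_combination (θ₁ + θ₂) * hst.symm
  linarith

section DisjUnion

variable {V₁ V₂ : Type*} [Fintype V₁] [Fintype V₂]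

theorem lovaszTheta_disjUnion_le (G₁ : SimpleGraph V₁) (G₂ : SimpleGraph V₂) :
    lovaszTheta (disjUnionGraph G₁ G₂) ≤ lovaszTheta G₁ + lovaszTheta G₂ := by
  refine Real.sSup_le ?_ (add_nonneg (lovaszTheta_nonneg G₁) (lovaszTheta_nonneg G₂))
  rintro _ ⟨ρ, hρ, htr, hG, rfl⟩
  have hρ₁ := hρ.submatrix (Sum.inl : V₁ → V₁ ⊕ V₂)
  have hρ₂ := hρ.submatrix (Sum.inr : V₂ → V₁ ⊕ V₂)
  have htr' : (ρ.submatrix Sum.inl Sum.inl).trace + (ρ.submatrix Sum.inr Sum.inr).trace = 1 := by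
    simpa [trace, Fintype.sum_sum_type] using htr
  have hγ := hρ.dotProduct_mulVec_sq_le (Sum.elim 1 0) (Sum.elim 0 1)
  simp only [dotProduct, mulVec, Fintype.sum_sum_type] at hγ
  have hsymm : ∑ j, ∑ k, ρ (.inr j) (.inl k) = ∑ j, ∑ k, ρ (.inl j) (.inr k) :=
    Finset.sum_comm.trans (by simp_rw [← hρ.isHermitian.apply (.inr _), star_trivial])
  have hsum : ∑ j, ∑ k, ρ j k = ∑ j, ∑ k, ρ (.inl j) (.inl k) +
      ∑ j, ∑ k, ρ (.inr j) (.inr k) + 2 * ∑ j, ∑ k, ρ (.inl j) (.inr k) := by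
    simp only [Fintype.sum_sum_type, Finset.sum_add_distrib, hsymm]
    ring
  rw [hsum]
  exact add_add_two_mul_le_of_sq_le_mul hρ₁.trace_nonneg hρ₂.trace_nonneg htr'
    hρ₂.sum_sum_nonneg (lovaszTheta_nonneg G₁) (lovaszTheta_nonneg G₂)
    (sum_sum_le_trace_mul_lovaszTheta hρ₁ fun j k h ↦ hG _ _ h)
    (sum_sum_le_trace_mul_lovaszTheta hρ₂ fun j k h ↦ hG _ _ h) (by simpa using hγ)

theorem add_mem_lovaszThetaValues_disjUnion {G₁ : SimpleGraph V₁} {G₂ : SimpleGraph V₂}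
    {a b : ℝ} (ha : a ∈ lovaszThetaValues G₁) (hb : b ∈ lovaszThetaValues G₂) (hab : 0 < a + b) :
    a + b ∈ lovaszThetaValues (disjUnionGraph G₁ G₂) := by
  obtain ⟨ρ₁, h₁, htr₁, hG₁, rfl⟩ := ha
  obtain ⟨ρ₂, h₂, htr₂, hG₂, rfl⟩ := hb
  simp only [← one_dotProduct_mulVec_one] at hab ⊢
  refine ⟨_, (h₁.fromBlocks_smul_vecMulVec h₂ 1 1).smul (inv_nonneg.mpr hab.le), ?_, ?_, ?_⟩
  · simp only [trace_smul, trace_fromBlocks, htr₁, htr₂, smul_eq_mul, mul_one]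
    field_simp
  · rintro (j | j) (k | k) h <;> simp_all [disjUnionGraph]
  · simp only [← one_dotProduct_mulVec_one, smul_mulVec, dotProduct_smul, ← Sum.elim_one_one,
      fromBlocks_mulVec, sumElim_dotProduct_sumElim, dotProduct_add, vecMulVec_mulVec,
      op_smul_eq_smul, smul_eq_mul, Sum.elim_comp_inl, Sum.elim_comp_inr,
      dotProduct_comm (ρ₁ *ᵥ 1), dotProduct_comm (ρ₂ *ᵥ 1)]
    field_simp

theorem add_le_lovaszTheta_disjUnion {G₁ : SimpleGraph V₁} {G₂ : SimpleGraph V₂} {a b : ℝ}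
    (ha : a ∈ lovaszThetaValues G₁) (hb : b ∈ lovaszThetaValues G₂) :
    a + b ≤ lovaszTheta (disjUnionGraph G₁ G₂) := by
  rcases (add_nonneg (lovaszThetaValues_nonneg ha) (lovaszThetaValues_nonneg hb)).eq_or_lt
    with h | h
  · exact h ▸ lovaszTheta_nonneg _
  · exact le_lovaszTheta (add_mem_lovaszThetaValues_disjUnion ha hb h)

end DisjUnion

/-- Lovász theta is additive under disjoint unions of graphs. -/
theorem lovaszTheta_disjUnion {V₁ V₂ : Type*} [Fintype V₁] [Fintype V₂]
    (G₁ : SimpleGraph V₁) (G₂ : SimpleGraph V₂) :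
    lovaszTheta (disjUnionGraph G₁ G₂) = lovaszTheta G₁ + lovaszTheta G₂ := by
  refine (lovaszTheta_disjUnion_le G₁ G₂).antisymm ?_
  rcases isEmpty_or_nonempty V₁ with h₁ | h₁
  · rw [lovaszTheta_of_isEmpty G₁, zero_add]
    exact lovaszTheta_le_of_equiv (Equiv.emptySum V₁ V₂) fun j k h ↦ by
      cases j <;> cases k <;> first | exact isEmptyElim ‹V₁› | exact h
  rcases isEmpty_or_nonempty V₂ with h₂ | h₂
  · rw [lovaszTheta_of_isEmpty G₂, add_zero]
    exact lovaszTheta_le_of_equiv (Equiv.sumEmpty V₁ V₂) fun j k h ↦ by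
      cases j <;> cases k <;> first | exact isEmptyElim ‹V₂› | exact h
  rw [lovaszTheta_eq_sSup G₁, lovaszTheta_eq_sSup G₂, ← csSup_add (lovaszThetaValues_nonempty G₁)
    (bddAbove_lovaszThetaValues G₁) (lovaszThetaValues_nonempty G₂) (bddAbove_lovaszThetaValues G₂)]
  exact csSup_le ((lovaszThetaValues_nonempty G₁).add (lovaszThetaValues_nonempty G₂))
    fun _ ⟨a, ha, b, hb, hab⟩ ↦ hab ▸ add_le_lovaszTheta_disjUnion ha hb
end
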